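/- Let x₀ ∈ (0,L), let V : (0,L) → ℝ be non-increasing and non-constant, and let f : (0,L) → ℝ be integrable with f < 0 on (0,x₀), f > 0 on (x₀,L), and ∫₀^L f = 0. Then ∫₀^L V f dx < 0. -/

import Mathlib

/-!
Subtracting `V x₀ · ∫ f = 0` turns `∫ V f` into `∫ (V - V x₀) f`. Since `V` is non-increasing and
`f` changes sign from negative to positive at `x₀`, the integrand is `≤ 0`, and it is `< 0`
wherever `V ≠ V x₀`. By monotonicity that set contains a whole interval `(0, z)` or `(z, L)`,
so it has positive measure.
-/

open MeasureTheory Set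

theorem setIntegral_neg_of_nonpos_of_neg_on {α : Type*} [MeasurableSpace α] {μ : Measure α}
    {s t : Set α} {g : α → ℝ} (hs : MeasurableSet s) (hg : IntegrableOn g s μ)
    (hle : ∀ x ∈ s, g x ≤ 0) (hlt : ∀ x ∈ t, g x < 0) (hts : t ⊆ s) (ht : μ t ≠ 0) :
    ∫ x in s, g x ∂μ < 0 := by
  have hpos : 0 < ∫ x in s, -g x ∂μ := by
    rw [setIntegral_pos_iff_support_of_nonneg_ae
      ((ae_restrict_iff' hs).2 (ae_of_all _ fun x hx => neg_nonneg.2 (hle x hx))) hg.neg]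
    exact (pos_iff_ne_zero.2 ht).trans_le
      (measure_mono fun x hx => ⟨neg_ne_zero.2 (hlt x hx).ne, hts hx⟩)
  rw [integral_neg] at hpos
  exact neg_pos.1 hpos

namespace AntitoneOn

variable {V f : ℝ → ℝ} {a b x₀ t : ℝ}

theorem volume_setOf_ne_ne_zero (hV : AntitoneOn V (Ioo a b)) (hx₀ : x₀ ∈ Ioo a b) {z : ℝ}
    (hz : z ∈ Ioo a b) (hVz : V z ≠ V x₀) : volume {t ∈ Ioo a b | V t ≠ V x₀} ≠ 0 := by
  rcases lt_or_gt_of_ne (ne_of_apply_ne V hVz) with hzx | hxz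
  · have hlt : V x₀ < V z := (hV hz hx₀ hzx.le).lt_of_ne hVz.symm
    have hsub : Ioo a z ⊆ {t ∈ Ioo a b | V t ≠ V x₀} := fun t ht =>
      have htab : t ∈ Ioo a b := ⟨ht.1, ht.2.trans hz.2⟩
      ⟨htab, (hlt.trans_le (hV htab hz ht.2.le)).ne'⟩
    refine ((?_ : 0 < volume (Ioo a z)).trans_le (measure_mono hsub)).ne'
    simpa using hz.1
  · have hlt : V z < V x₀ := (hV hx₀ hz hxz.le).lt_of_ne hVz
    have hsub : Ioo z b ⊆ {t ∈ Ioo a b | V t ≠ V x₀} := fun t ht =>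
      have htab : t ∈ Ioo a b := ⟨hz.1.trans ht.1, ht.2⟩
      ⟨htab, ((hV hz htab ht.1.le).trans_lt hlt).ne⟩
    refine ((?_ : 0 < volume (Ioo z b)).trans_le (measure_mono hsub)).ne'
    simpa using hz.2

theorem sub_mul_neg_of_ne (hV : AntitoneOn V (Ioo a b)) (hx₀ : x₀ ∈ Ioo a b)
    (hf₁ : ∀ x ∈ Ioo a x₀, f x < 0) (hf₂ : ∀ x ∈ Ioo x₀ b, 0 < f x) (ht : t ∈ Ioo a b)
    (hVt : V t ≠ V x₀) : (V t - V x₀) * f t < 0 := by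
  rcases lt_or_gt_of_ne (ne_of_apply_ne V hVt) with htx | hxt
  · have hlt : V x₀ < V t := (hV ht hx₀ htx.le).lt_of_ne hVt.symm
    exact mul_neg_of_pos_of_neg (sub_pos.2 hlt) (hf₁ t ⟨ht.1, htx⟩)
  · have hlt : V t < V x₀ := (hV hx₀ ht hxt.le).lt_of_ne hVt
    exact mul_neg_of_neg_of_pos (sub_neg.2 hlt) (hf₂ t ⟨hxt, ht.2⟩)

theorem sub_mul_nonpos (hV : AntitoneOn V (Ioo a b)) (hx₀ : x₀ ∈ Ioo a b)
    (hf₁ : ∀ x ∈ Ioo a x₀, f x < 0) (hf₂ : ∀ x ∈ Ioo x₀ b, 0 < f x) (ht : t ∈ Ioo a b) :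
    (V t - V x₀) * f t ≤ 0 := by
  by_cases hVt : V t = V x₀
  · simp [hVt]
  · exact (hV.sub_mul_neg_of_ne hx₀ hf₁ hf₂ ht hVt).le

end AntitoneOn

/-- Key monotonicity estimate: if `V` is non-increasing and non-constant on `(0,L)` and
`f` is negative on `(0,x₀)`, positive on `(x₀,L)` with zero mean, then `∫ V f < 0`. -/
theorem integral_antitone_mul_sign_change_neg (L x₀ : ℝ) (hx₀ : x₀ ∈ Set.Ioo 0 L)
    (V f : ℝ → ℝ)
    (hV : AntitoneOn V (Set.Ioo 0 L))
    (hVnc : ¬ ∀ x ∈ Set.Ioo 0 L, ∀ y ∈ Set.Ioo 0 L, V x = V y)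
    (hf : IntegrableOn f (Set.Ioo 0 L))
    (hVf : IntegrableOn (fun x => V x * f x) (Set.Ioo 0 L))
    (hf1 : ∀ x ∈ Set.Ioo 0 x₀, f x < 0)
    (hf2 : ∀ x ∈ Set.Ioo x₀ L, 0 < f x)
    (hf0 : ∫ x in Set.Ioo 0 L, f x = 0) :
    ∫ x in Set.Ioo 0 L, V x * f x < 0 := by
  obtain ⟨z, hz, hVz⟩ : ∃ z ∈ Ioo 0 L, V z ≠ V x₀ := by
    by_contra! h
    exact hVnc fun x hx y hy => (h x hx).trans (h y hy).symm
  have hshift : ∫ x in Ioo 0 L, V x * f x = ∫ x in Ioo 0 L, (V x - V x₀) * f x := by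
    simp_rw [sub_mul]
    rw [integral_sub hVf (hf.const_mul _), integral_const_mul, hf0, mul_zero, sub_zero]
  have hint : IntegrableOn (fun x => (V x - V x₀) * f x) (Ioo 0 L) := by
    simpa only [sub_mul, Pi.sub_def] using hVf.sub (hf.const_mul (V x₀))
  rw [hshift]
  exact setIntegral_neg_of_nonpos_of_neg_on measurableSet_Ioo hint
    (fun t ht => hV.sub_mul_nonpos hx₀ hf1 hf2 ht)
    (fun t ht => hV.sub_mul_neg_of_ne hx₀ hf1 hf2 ht.1 ht.2) (fun t ht => ht.1)
    (hV.volume_setOf_ne_ne_zero hx₀ hz hVz)
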